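/- In the Setup, let 0 ≤ i, j ≤ d and u ∈ U_j. If i < j then E_i u = 0. If i ≥ j then E_i u equals the scalar [(q^{2i−d} − q^{2j−d})(q^{2i−d} − q^{2j+2−d})⋯(q^{2i−d} − q^{2i−2−d})]⁻¹ (an empty product being 1) times the sum ∑_{h=0}^{d−i} R^{i−j+h}u / [(q^{2i−d} − q^{2i+2−d})(q^{2i−d} − q^{2i+4−d})⋯(q^{2i−d} − q^{2i+2h−d})] (the h = 0 denominator being the empty product 1). -/
import Mathlib


noncomputable section

/-- `[n]_q = (qⁿ − q⁻ⁿ)/(q − q⁻¹)`. -/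
def qInt {K : Type*} [Field K] (q : K) (n : ℕ) : K :=
  (q ^ n - q⁻¹ ^ n) / (q - q⁻¹)

/-- `[n]_q! = [n]_q [n−1]_q ⋯ [1]_q`. -/
def qFac {K : Type*} [Field K] (q : K) (n : ℕ) : K :=
  ∏ k ∈ Finset.range n, qInt q (k + 1)

/-- `X, Y` satisfy the cubic `q`-Serre relations. -/
def QSerre {K V : Type*} [Field K] [AddCommGroup V] [Module K V]
    (q : K) (X Y : Module.End K V) : Prop :=
  X ^ 3 * Y - qInt q 3 • (X ^ 2 * Y * X) + qInt q 3 • (X * Y * X ^ 2) - Y * X ^ 3 = 0 ∧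
  Y ^ 3 * X - qInt q 3 • (Y ^ 2 * X * Y) + qInt q 3 • (Y * X * Y ^ 2) - X * Y ^ 3 = 0

/-- `U 0, …, U d` is a decomposition of `V` with diameter `d`: the `U i` with `i ≤ d` are nonzero,
`U i = 0` for `i > d`, and `V` is the (internal) direct sum of the `U i`. -/
def IsDecomposition {K V : Type*} [Field K] [AddCommGroup V] [Module K V]
    (d : ℕ) (U : ℕ → Submodule K V) : Prop :=
  (∀ i, i ≤ d → U i ≠ ⊥) ∧ (∀ i, d < i → U i = ⊥) ∧
  (⨆ i, U i) = ⊤ ∧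
  ∀ i, Disjoint (U i) (⨆ j, ⨆ _ : j ≠ i, U j)

/-- The Setup: `U 0, …, U d` is a decomposition of `V`; `R` is a raising map, `L` a lowering map,
and `A` (resp. `As`) acts on `U i` as `R + q^{2i−d}` (resp. `L + q^{d−2i}`). -/
def TDSetup {K V : Type*} [Field K] [AddCommGroup V] [Module K V]
    (q : K) (d : ℕ) (U : ℕ → Submodule K V) (R L A As : Module.End K V) : Prop :=
  IsDecomposition d U ∧
  (∀ i, Submodule.map R (U i) ≤ U (i + 1)) ∧
  (∀ i, Submodule.map L (U (i + 1)) ≤ U i) ∧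
  (∀ u ∈ U 0, L u = 0) ∧
  (∀ i, ∀ u ∈ U i, A u = R u + q ^ (2 * (i : ℤ) - d) • u) ∧
  (∀ i, ∀ u ∈ U i, As u = L u + q ^ ((d : ℤ) - 2 * (i : ℤ)) • u)

/-- `E i` is, for each `i`, the projection onto `P i` determined by the decomposition of `V` into
the subspaces `P j`: it is the identity on `P i` and zero on each `P j` with `j ≠ i`. -/
def IsProjFamily {K V : Type*} [Field K] [AddCommGroup V] [Module K V]
    (P : ℕ → Submodule K V) (E : ℕ → Module.End K V) : Prop :=
  ∀ i, (∀ v ∈ P i, E i v = v) ∧ ∀ j, j ≠ i → ∀ v ∈ P j, E i v = 0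

section Aux

open Finset Polynomial

/-- Lagrange partial-fractions identity. -/
lemma lag_sum {F : Type*} [Field F] (s : Finset ℕ) (v : ℕ → F)
    (hvs : Set.InjOn v s) (hs : 2 ≤ s.card) :
    ∑ i ∈ s, (∏ k ∈ s.erase i, (v i - v k))⁻¹ = 0 := by
  have h1 := Lagrange.sum_basis hvs (Finset.card_pos.mp (by omega))
  have h2 := congrArg (fun p => Polynomial.coeff p (s.card - 1)) h1
  simp only [Polynomial.finset_sum_coeff] at h2
  rw [Polynomial.coeff_one, if_neg (by omega)] at h2
  rw [← h2]
  refine Finset.sum_congr rfl fun i hi => ?_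
  have hdeg := Lagrange.natDegree_basis hvs hi
  have hlc : (Lagrange.basis s v i).coeff (s.card - 1)
      = (Lagrange.basis s v i).leadingCoeff := by
    rw [Polynomial.leadingCoeff, hdeg]
  have hlc2 : (Lagrange.basis s v i).leadingCoeff = ∏ k ∈ s.erase i, (v i - v k)⁻¹ := by
    rw [Lagrange.basis, Polynomial.leadingCoeff_prod]
    refine Finset.prod_congr rfl fun k _ => ?_
    rw [Lagrange.basisDivisor, Polynomial.leadingCoeff_mul, Polynomial.leadingCoeff_C,
      (Polynomial.monic_X_sub_C _).leadingCoeff, mul_one]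
  rw [hlc, hlc2, Finset.prod_inv_distrib]

variable {K V : Type*} [Field K] [AddCommGroup V] [Module K V]

/-- The candidate eigenvector component. -/
def wvec (θ : ℕ → K) (R : Module.End K V) (d j : ℕ) (u : V) (p : ℕ) : V :=
  (∏ k ∈ Finset.Ico j p, (θ p - θ k))⁻¹ •
    ∑ h ∈ Finset.range (d - p + 1),
      (∏ m ∈ Finset.Icc 1 h, (θ p - θ (p + m)))⁻¹ • (R ^ (p - j + h)) u

lemma wvec_eig (θ : ℕ → K) (d : ℕ) (U : ℕ → Submodule K V) (R A : Module.End K V)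
    (hθinj : ∀ k l : ℕ, k ≠ l → θ k ≠ θ l)
    (hUbot : ∀ m, d < m → U m = ⊥)
    (hRmap : ∀ m, Submodule.map R (U m) ≤ U (m + 1))
    (hA : ∀ m, ∀ v ∈ U m, A v = R v + θ m • v)
    (j : ℕ) (u : V) (hu : u ∈ U j)
    (p : ℕ) (hjp : j ≤ p) (hpd : p ≤ d) :
    A (wvec θ R d j u p) = θ p • wvec θ R d j u p := by
  have hRu : ∀ n : ℕ, (R ^ n) u ∈ U (j + n) := by
    intro n
    induction n with
    | zero => simpa using hu
    | succ n ih =>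
      have := hRmap (j + n) ⟨_, ih, rfl⟩
      rw [pow_succ', Module.End.mul_apply]
      exact this
  have hv : ∀ h : ℕ, (R ^ (p - j + h)) u ∈ U (p + h) := by
    intro h
    have := hRu (p - j + h)
    have e : j + (p - j + h) = p + h := by omega
    rwa [e] at this
  set a : ℕ → K := fun h => ∏ m ∈ Finset.Icc 1 h, (θ p - θ (p + m)) with ha
  set v : ℕ → V := fun h => (R ^ (p - j + h)) u with hvdef
  have hAv : ∀ h : ℕ, A (v h) = v (h + 1) + θ (p + h) • v h := by
    intro h
    rw [hvdef]
    simp only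
    rw [hA (p + h) _ (hv h)]
    congr 1
    have he : p - j + (h + 1) = (p - j + h) + 1 := by omega
    rw [he, pow_succ', Module.End.mul_apply]
  have hvtop : v (d - p + 1) = 0 := by
    have := hv (d - p + 1)
    rw [hUbot (p + (d - p + 1)) (by omega)] at this
    simpa [hvdef] using this
  -- the core sum
  have key : A (∑ h ∈ Finset.range (d - p + 1), (a h)⁻¹ • v h)
      = θ p • ∑ h ∈ Finset.range (d - p + 1), (a h)⁻¹ • v h := by
    rw [map_sum, Finset.smul_sum]
    have step : ∀ h, A ((a h)⁻¹ • v h)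
        = (a h)⁻¹ • v (h + 1) + ((a h)⁻¹ * θ (p + h)) • v h := by
      intro h
      rw [map_smul, hAv h, smul_add, smul_smul]
    simp only [step]
    rw [Finset.sum_add_distrib]
    -- shift identity: ∑_{h<n+1} (a h)⁻¹ • v (h+1) = ∑_{h<n+1} ((a h)⁻¹*(θ p - θ (p+h))) • v h
    have shift : ∑ h ∈ Finset.range (d - p + 1), (a h)⁻¹ • v (h + 1)
        = ∑ h ∈ Finset.range (d - p + 1), ((a h)⁻¹ * (θ p - θ (p + h))) • v h := by
      rw [Finset.sum_range_succ, Finset.sum_range_succ']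
      have h0 : ((a 0)⁻¹ * (θ p - θ (p + 0))) • v 0 = 0 := by
        simp
      have htop : (a (d - p))⁻¹ • v (d - p + 1) = 0 := by
        rw [hvtop, smul_zero]
      rw [h0, htop, add_zero, add_zero]
      refine Finset.sum_congr rfl fun h _ => ?_
      have hstep : a (h + 1) = a h * (θ p - θ (p + (h + 1))) := by
        rw [ha]
        simp only
        rw [Finset.prod_Icc_succ_top (by omega)]
      have hne : θ p - θ (p + (h + 1)) ≠ 0 :=
        sub_ne_zero.mpr (hθinj p (p + (h + 1)) (by omega))
      rw [hstep, mul_inv, mul_assoc, inv_mul_cancel₀ hne, mul_one]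
    rw [shift, ← Finset.sum_add_distrib]
    refine Finset.sum_congr rfl fun h _ => ?_
    rw [← add_smul, smul_smul]
    congr 1
    ring
  rw [wvec, map_smul, key, smul_comm]

lemma wvec_sum (θ : ℕ → K) (d : ℕ) (R : Module.End K V)
    (hθinj : ∀ k l : ℕ, k ≠ l → θ k ≠ θ l)
    (j : ℕ) (hjd : j ≤ d) (u : V) :
    ∑ p ∈ Finset.Icc j d, wvec θ R d j u p = u := by
  set F : ℕ → ℕ → V := fun p n =>
    (∏ k ∈ (Finset.Icc j (j + n)).erase p, (θ p - θ k))⁻¹ • (R ^ n) u with hF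
  -- rewrite each wvec as a sum of F's
  have hterm : ∀ p ∈ Finset.Icc j d, wvec θ R d j u p
      = ∑ h ∈ Finset.range (d - p + 1), F p (p - j + h) := by
    intro p hp
    rw [Finset.mem_Icc] at hp
    rw [wvec, Finset.smul_sum]
    refine Finset.sum_congr rfl fun h _ => ?_
    rw [smul_smul, hF]
    simp only
    have hidx : j + (p - j + h) = p + h := by omega
    rw [hidx]
    congr 2
    -- (c p) * (a p h) = ∏ over erase
    have hsplit : (Finset.Icc j (p + h)).erase p
        = Finset.Ico j p ∪ Finset.Ioc p (p + h) := by
      ext k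
      simp only [Finset.mem_erase, Finset.mem_Icc, Finset.mem_union, Finset.mem_Ico,
        Finset.mem_Ioc]
      omega
    have hdisj : Disjoint (Finset.Ico j p) (Finset.Ioc p (p + h)) := by
      rw [Finset.disjoint_left]
      intro k hk1 hk2
      simp only [Finset.mem_Ico] at hk1
      simp only [Finset.mem_Ioc] at hk2
      omega
    rw [hsplit, Finset.prod_union hdisj, mul_inv]
    congr 1
    rw [inv_inj]
    refine Finset.prod_nbij' (fun m => p + m) (fun k => k - p) ?_ ?_ ?_ ?_ ?_
    · intro m hm; simp only [Finset.mem_Icc] at hm; simp only [Finset.mem_Ioc]; omega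
    · intro k hk; simp only [Finset.mem_Ioc] at hk; simp only [Finset.mem_Icc]; omega
    · intro m hm; simp only [Finset.mem_Icc] at hm; omega
    · intro k hk; simp only [Finset.mem_Ioc] at hk; omega
    · intro m hm; rfl
  rw [Finset.sum_congr rfl hterm]
  rw [Finset.sum_sigma']
  -- reindex
  have hre : ∑ x ∈ (Finset.Icc j d).sigma (fun p => Finset.range (d - p + 1)),
        F x.1 (x.1 - j + x.2)
      = ∑ y ∈ (Finset.range (d - j + 1)).sigma (fun n => Finset.Icc j (j + n)),
        F y.2 y.1 := by
    refine Finset.sum_nbij' (fun x => ⟨x.1 - j + x.2, x.1⟩) (fun y => ⟨y.2, y.1 - (y.2 - j)⟩)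
      ?_ ?_ ?_ ?_ ?_
    · rintro ⟨p, h⟩ hx
      simp only [Finset.mem_sigma, Finset.mem_Icc, Finset.mem_range] at hx ⊢
      omega
    · rintro ⟨n, p⟩ hy
      simp only [Finset.mem_sigma, Finset.mem_Icc, Finset.mem_range] at hy ⊢
      omega
    · rintro ⟨p, h⟩ hx
      simp only [Finset.mem_sigma, Finset.mem_Icc, Finset.mem_range] at hx
      dsimp only
      have e : p - j + h - (p - j) = h := by omega
      rw [e]
    · rintro ⟨n, p⟩ hy
      simp only [Finset.mem_sigma, Finset.mem_Icc, Finset.mem_range] at hy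
      dsimp only
      have e : p - j + (n - (p - j)) = n := by omega
      rw [e]
    · rintro ⟨p, h⟩ _
      rfl
  rw [hre, Finset.sum_sigma]
  -- inner sums
  have hinner : ∀ n ∈ Finset.range (d - j + 1),
      ∑ p ∈ Finset.Icc j (j + n), F p n = if n = 0 then u else 0 := by
    intro n _
    rcases Nat.eq_zero_or_pos n with hn | hn
    · subst hn
      simp only [if_pos rfl, add_zero, Finset.Icc_self, Finset.sum_singleton, hF]
      simp
    · rw [if_neg (by omega)]
      have : ∑ p ∈ Finset.Icc j (j + n), F p n
          = (∑ p ∈ Finset.Icc j (j + n),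
              (∏ k ∈ (Finset.Icc j (j + n)).erase p, (θ p - θ k))⁻¹) • (R ^ n) u := by
        rw [Finset.sum_smul]
      rw [this, lag_sum _ θ ?_ ?_, zero_smul]
      · intro k hk l hl hkl
        by_contra hne
        exact hθinj k l hne hkl
      · rw [Nat.card_Icc]
        omega
  have h2 : ∑ n ∈ Finset.range (d - j + 1), ∑ p ∈ Finset.Icc j (j + n), F p n = u := by
    rw [Finset.sum_congr rfl hinner,
      Finset.sum_ite_eq' (Finset.range (d - j + 1)) 0 (fun _ => u)]
    rw [if_pos (by simp)]
  exact h2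

theorem auxmain (θ : ℕ → K) (d : ℕ) (U : ℕ → Submodule K V) (R A : Module.End K V)
    (hθinj : ∀ k l : ℕ, k ≠ l → θ k ≠ θ l)
    (hUbot : ∀ m, d < m → U m = ⊥)
    (hRmap : ∀ m, Submodule.map R (U m) ≤ U (m + 1))
    (hA : ∀ m, ∀ v ∈ U m, A v = R v + θ m • v)
    (E : ℕ → Module.End K V)
    (hE : IsProjFamily (fun i => Module.End.eigenspace A (θ i)) E)
    (i j : ℕ) (hi : i ≤ d) (hj : j ≤ d) (u : V) (hu : u ∈ U j) :
    (i < j → E i u = 0) ∧ (j ≤ i → E i u = wvec θ R d j u i) := by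
  have hmem : ∀ p, j ≤ p → p ≤ d →
      wvec θ R d j u p ∈ Module.End.eigenspace A (θ p) := by
    intro p h1 h2
    rw [Module.End.mem_eigenspace_iff]
    exact wvec_eig θ d U R A hθinj hUbot hRmap hA j u hu p h1 h2
  have hsum : ∑ p ∈ Finset.Icc j d, wvec θ R d j u p = u :=
    wvec_sum θ d R hθinj j hj u
  have hEu : E i u = ∑ p ∈ Finset.Icc j d, E i (wvec θ R d j u p) := by
    rw [← map_sum, hsum]
  constructor
  · intro hij
    rw [hEu]
    refine Finset.sum_eq_zero fun p hp => ?_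
    rw [Finset.mem_Icc] at hp
    exact (hE i).2 p (by omega) _ (hmem p hp.1 hp.2)
  · intro hij
    rw [hEu]
    rw [Finset.sum_eq_single_of_mem i (Finset.mem_Icc.mpr ⟨hij, hi⟩)
      (fun p hp hpne => (hE i).2 p hpne _
        (hmem p (Finset.mem_Icc.mp hp).1 (Finset.mem_Icc.mp hp).2))]
    exact (hE i).1 _ (hmem i hij hi)

theorem theta_ne {K : Type*} [Field K] (q : K) (hq : q ≠ 0)
    (hq1 : ∀ n : ℕ, 0 < n → q ^ n ≠ 1) (d : ℕ) :
    ∀ k l : ℕ, k ≠ l → (q ^ (2 * (k : ℤ) - d) : K) ≠ q ^ (2 * (l : ℤ) - d) := by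
  have key : ∀ k l : ℕ, k < l → (q ^ (2 * (k : ℤ) - d) : K) ≠ q ^ (2 * (l : ℤ) - d) := by
    intro k l hkl heq
    have h1 : (2 * (l : ℤ) - d) = (2 * (k : ℤ) - d) + ((2 * (l - k) : ℕ) : ℤ) := by
      push_cast
      omega
    have ha : (q : K) ^ (2 * (k : ℤ) - d) ≠ 0 := zpow_ne_zero _ hq
    have heq2 : (q : K) ^ (2 * (k : ℤ) - d)
        = q ^ (2 * (k : ℤ) - d) * q ^ (2 * (l - k)) := by
      conv_lhs => rw [heq]
      rw [h1, zpow_add₀ hq, zpow_natCast]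
    have h2 : (q : K) ^ (2 * (l - k)) = 1 :=
      (mul_left_cancel₀ ha (by rw [mul_one]; exact heq2)).symm
    exact hq1 (2 * (l - k)) (by omega) h2
  intro k l hkl
  rcases Nat.lt_or_ge k l with h | h
  · exact key k l h
  · exact fun he => key l k (by omega) he.symm

end Aux

/-- Lemma 8.2(i): the action of `E i` on `U j` is zero if `i < j`, and is given
by the displayed formula involving powers of `R` if `i ≥ j`. -/
theorem statement7 {K : Type*} [Field K] [IsAlgClosed K] [CharZero K]
    (q : K) (hq : q ≠ 0) (hq1 : ∀ n : ℕ, 0 < n → q ^ n ≠ 1)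
    {V : Type*} [AddCommGroup V] [Module K V] [FiniteDimensional K V]
    (d : ℕ) (U : ℕ → Submodule K V) (R L A As : Module.End K V)
    (hsetup : TDSetup q d U R L A As)
    (E : ℕ → Module.End K V)
    (hE : IsProjFamily (fun i => Module.End.eigenspace A (q ^ (2 * (i : ℤ) - d))) E)
    (i j : ℕ) (hi : i ≤ d) (hj : j ≤ d) (u : V) (hu : u ∈ U j) :
    (i < j → E i u = 0) ∧
    (j ≤ i → E i u =
      (∏ k ∈ Finset.Ico j i, (q ^ (2 * (i : ℤ) - d) - q ^ (2 * (k : ℤ) - d)))⁻¹ •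
        ∑ h ∈ Finset.range (d - i + 1),
          (∏ m ∈ Finset.Icc 1 h,
            (q ^ (2 * (i : ℤ) - d) - q ^ (2 * ((i + m : ℕ) : ℤ) - d)))⁻¹ •
              (R ^ (i - j + h)) u) := by
  obtain ⟨⟨-, hUbot, -, -⟩, hRmap, -, -, hA, -⟩ := hsetup
  exact auxmain (fun k => q ^ (2 * (k : ℤ) - d)) d U R A
    (theta_ne q hq hq1 d) hUbot hRmap hA E hE i j hi hj u hu
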